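/- Let f : ℝ → ℝ be differentiable and everywhere positive, let A ∈ ℝ, and let ψ : ℝ × ℝ → ℂ² be a function whose partial derivatives ∂_t ψ and ∂_θ ψ exist at all the relevant points. Then for all (t,θ) ∈ ℝ × ℝ, D(𝒰_r ψ)(t,θ) = (𝒰_r (D ψ))(t,θ); that is, the lifted reflection operator 𝒰_r intertwines the twisted warped-cylinder Dirac operator with itself. -/

import Mathlib

open Matrix Complex

/-- The Pauli matrix `σ₁`. -/
noncomputable def sigma1 : Matrix (Fin 2) (Fin 2) ℂ := !![0, 1; 1, 0]

/-- The Pauli matrix `σ₂`. -/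
noncomputable def sigma2 : Matrix (Fin 2) (Fin 2) ℂ := !![0, -Complex.I; Complex.I, 0]

/-- The twisted warped-cylinder Dirac operator
`(Dψ)(t,θ) = i σ₁·( ∂_t ψ + (f'/(2f)) ψ ) + i σ₂·(1/f)·( ∂_θ ψ + iA ψ )`. -/
noncomputable def Dirac (f : ℝ → ℝ) (A : ℝ) (ψ : ℝ × ℝ → Fin 2 → ℂ) :
    ℝ × ℝ → Fin 2 → ℂ :=
  fun p =>
    Complex.I • sigma1.mulVec
        (deriv (fun s : ℝ => ψ (s, p.2)) p.1
          + ((deriv f p.1 / (2 * f p.1) : ℝ) : ℂ) • ψ p)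
    + Complex.I • ((((f p.1 : ℝ) : ℂ)⁻¹) • sigma2.mulVec
        (deriv (fun x : ℝ => ψ (p.1, x)) p.2 + (Complex.I * (A : ℂ)) • ψ p))

/-- The lifted reflection operator `(𝒰_r ψ)(t,θ) = e^{-2iAθ} · σ₁ · ψ(t,-θ)`. -/
noncomputable def liftedReflection (A : ℝ) (ψ : ℝ × ℝ → Fin 2 → ℂ) :
    ℝ × ℝ → Fin 2 → ℂ :=
  fun p => Complex.exp (-2 * Complex.I * (A : ℂ) * p.2) • sigma1.mulVec (ψ (p.1, -p.2))

lemma hasDerivAt_mulVec (M : Matrix (Fin 2) (Fin 2) ℂ) {g : ℝ → Fin 2 → ℂ}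
    {v : Fin 2 → ℂ} {t : ℝ} (hg : HasDerivAt g v t) :
    HasDerivAt (fun s => M.mulVec (g s)) (M.mulVec v) t := by
  have hL := ((LinearMap.toContinuousLinearMap (M.mulVecLin)).restrictScalars ℝ).hasFDerivAt
    (x := g t)
  simpa [Function.comp_def] using hL.comp_hasDerivAt t hg

/-- The lifted reflection operator intertwines the twisted warped-cylinder Dirac
operator with itself: `D(𝒰_r ψ) = 𝒰_r(D ψ)` pointwise. -/
theorem liftedReflection_intertwines_Dirac (f : ℝ → ℝ) (hf : Differentiable ℝ f)
    (hfpos : ∀ t, 0 < f t) (A : ℝ) (ψ : ℝ × ℝ → Fin 2 → ℂ)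
    (hψt : ∀ t θ : ℝ, DifferentiableAt ℝ (fun s : ℝ => ψ (s, θ)) t)
    (hψθ : ∀ t θ : ℝ, DifferentiableAt ℝ (fun x : ℝ => ψ (t, x)) θ) :
    ∀ t θ : ℝ,
      Dirac f A (liftedReflection A ψ) (t, θ) = liftedReflection A (Dirac f A ψ) (t, θ) := by
  intro t θ
  simp only [Dirac, liftedReflection]
  set e : ℂ := Complex.exp (-2 * Complex.I * (A : ℂ) * θ) with he
  set v : Fin 2 → ℂ := deriv (fun s : ℝ => ψ (s, -θ)) t with hv
  set v' : Fin 2 → ℂ := deriv (fun x : ℝ => ψ (t, x)) (-θ) with hv'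
  have hvd : HasDerivAt (fun s : ℝ => ψ (s, -θ)) v t := (hψt t (-θ)).hasDerivAt
  have hv'd : HasDerivAt (fun x : ℝ => ψ (t, x)) v' (-θ) := (hψθ t (-θ)).hasDerivAt
  have hUt : HasDerivAt (fun s : ℝ => e • sigma1.mulVec (ψ (s, -θ)))
      (e • sigma1.mulVec v) t := (hasDerivAt_mulVec sigma1 hvd).const_smul e
  have hneg : HasDerivAt (fun x : ℝ => ψ (t, -x)) ((-1 : ℝ) • v') θ :=
    hv'd.scomp θ (hasDerivAt_neg θ)
  have hexp1 : HasDerivAt (fun x : ℝ => -2 * Complex.I * (A : ℂ) * (x : ℝ))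
      (-2 * Complex.I * (A : ℂ)) θ := by
    simpa using (Complex.ofRealCLM.hasDerivAt (x := θ)).const_mul (-2 * Complex.I * (A : ℂ))
  have hexp : HasDerivAt (fun x : ℝ => Complex.exp (-2 * Complex.I * (A : ℂ) * (x : ℝ)))
      ((-2 * Complex.I * (A : ℂ)) • e) θ :=
    (Complex.hasDerivAt_exp (-2 * Complex.I * (A : ℂ) * θ)).scomp θ hexp1
  have hUθ : HasDerivAt (fun x : ℝ => Complex.exp (-2 * Complex.I * (A : ℂ) * (x : ℝ)) •
      sigma1.mulVec (ψ (t, -x))) _ θ := hexp.smul (hasDerivAt_mulVec sigma1 hneg)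
  rw [hUt.deriv, hUθ.deriv]
  funext i
  fin_cases i <;>
    simp [sigma1, sigma2, Matrix.mulVec, dotProduct, Fin.sum_univ_two,
      Pi.add_apply, Pi.smul_apply, smul_eq_mul] <;>
    ring_nf <;>
    simp [Complex.I_sq] <;>
    exact Or.inl (by rw [he]; ring_nf)
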